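/- arXiv:1504.01608 — 3 statements merged into one kernel-verified Lean document; each statement's English description precedes it below -/
import Mathlib

section
/- Every natural number n can be written as x^2 + y^2 + ⌊z^2/2⌋ for some integers x, y, z. -/
/-!
Legendre's theorem for `N ≡ 1, 2 (mod 4)`, following Dirichlet and Ankeny. A positive definite
integral ternary form of determinant 1 with leading coefficient `a ≥ 2` takes a value in `(0, a)`
at a primitive vector: Hermite's bound on the binary form of determinant `a` obtained by
completing the square, plus rounding of the first coordinate. Moving that vector to the first
basis vector and inducting on `a` shows the form is equivalent to `x² + y² + z²`. For odd `m`,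
Dirichlet's theorem gives a prime `p ≡ -1 (mod N)` (`N = m` or `2m`) at which `-N` is a
quadratic residue, say `p ∣ N b² + 1`; then `N x² + 2xz + A y² + 2b yz + C z²` with
`p A = N b² + 1` and `N C = p + 1` has determinant 1 and represents `N`.

If `2n + r = x² + y² + z²` with `r ∈ {0, 1}`, order the terms so that `x ≡ y` and
`z ≡ r (mod 2)`; then `n = ((x + y)/2)² + ((x - y)/2)² + ⌊z²/2⌋`.
-/

open Matrix NumberTheorySymbols

section Congruence

variable {ι R : Type*} [Fintype ι]

theorem dotProduct_mulVec_transpose_mul_mul [CommSemiring R] (A U : Matrix ι ι R) (v : ι → R) :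
    v ⬝ᵥ (Uᵀ * A * U) *ᵥ v = (U *ᵥ v) ⬝ᵥ A *ᵥ (U *ᵥ v) := by
  rw [← mulVec_mulVec, ← mulVec_mulVec, dotProduct_mulVec v Uᵀ, vecMul_transpose]

theorem Matrix.IsSymm.transpose_mul_mul [CommSemiring R] {A : Matrix ι ι R} (hA : A.IsSymm)
    (U : Matrix ι ι R) : (Uᵀ * A * U).IsSymm := by
  simp [IsSymm, transpose_mul, hA.eq, Matrix.mul_assoc]

variable [DecidableEq ι]

theorem exists_eq_transpose_mul_self_of_transpose_mul_mul [CommRing R] {A U V : Matrix ι ι R}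
    (hU : IsUnit U) (h : Uᵀ * A * U = Vᵀ * V) : ∃ W, A = Wᵀ * W := by
  have hU' : U * U⁻¹ = 1 := mul_nonsing_inv U ((isUnit_iff_isUnit_det U).mp hU)
  refine ⟨V * U⁻¹, ?_⟩
  calc A = (U * U⁻¹)ᵀ * A * (U * U⁻¹) := by simp [hU']
    _ = (U⁻¹)ᵀ * (Uᵀ * A * U) * U⁻¹ := by simp only [transpose_mul, Matrix.mul_assoc]
    _ = (V * U⁻¹)ᵀ * (V * U⁻¹) := by rw [h]; simp only [transpose_mul, Matrix.mul_assoc]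

theorem det_transpose_mul_mul_of_isUnit {A U : Matrix ι ι ℤ} (hU : IsUnit U) :
    (Uᵀ * A * U).det = A.det := by
  rw [det_mul, det_mul, det_transpose, mul_comm, ← mul_assoc, ← sq,
    Int.isUnit_sq ((isUnit_iff_isUnit_det U).mp hU), one_mul]

def IsPosForm (A : Matrix ι ι ℤ) : Prop :=
  ∀ v : ι → ℤ, v ≠ 0 → 0 < v ⬝ᵥ A *ᵥ v

theorem IsPosForm.diag_pos {A : Matrix ι ι ℤ} (h : IsPosForm A) (i : ι) : 0 < A i i := by
  simpa using h (Pi.single i 1) (by simp)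

theorem IsPosForm.transpose_mul_mul {A U : Matrix ι ι ℤ} (hA : IsPosForm A) (hU : IsUnit U) :
    IsPosForm (Uᵀ * A * U) := fun v hv => by
  rw [dotProduct_mulVec_transpose_mul_mul]
  exact hA _ fun h => hv (mulVec_injective_of_isUnit hU (h.trans (mulVec_zero U).symm))

end Congruence

theorem exists_four_mul_sq_le (a t : ℤ) (ha : 0 < a) :
    ∃ x : ℤ, 4 * (t + a * x) ^ 2 ≤ a ^ 2 := by
  have hdiv := Int.emod_add_mul_ediv t a
  have h0 := Int.emod_nonneg t ha.ne'
  have h1 := Int.emod_lt_of_pos t ha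
  rcases le_or_gt (2 * (t % a)) a with h | h
  · exact ⟨-(t / a), by nlinarith⟩
  · exact ⟨-(t / a) - 1, by nlinarith⟩

section Binary

theorem dotProduct_mulVec_fin_two (B F C : ℤ) (v : Fin 2 → ℤ) :
    v ⬝ᵥ !![B, F; F, C] *ᵥ v = B * v 0 ^ 2 + 2 * F * v 0 * v 1 + C * v 1 ^ 2 := by
  simp [dotProduct, mulVec, Fin.sum_univ_two]
  ring

theorem transpose_mul_mul_fin_two (B F C p q r s : ℤ) :
    !![p, q; r, s]ᵀ * !![B, F; F, C] * !![p, q; r, s] =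
      !![B * p ^ 2 + 2 * F * p * r + C * r ^ 2, B * p * q + F * (p * s + q * r) + C * r * s;
        B * p * q + F * (p * s + q * r) + C * r * s, B * q ^ 2 + 2 * F * q * s + C * s ^ 2] := by
  ext i j
  fin_cases i <;> fin_cases j <;> simp [Matrix.mul_apply, Fin.sum_univ_two] <;> ring

theorem IsPosForm.fin_two_pos {B F C : ℤ} (h : IsPosForm !![B, F; F, C]) : 0 < B ∧ 0 < C :=
  ⟨by simpa using h.diag_pos 0, by simpa using h.diag_pos 1⟩

theorem exists_reduced_fin_two (B F C : ℤ) (hpos : IsPosForm !![B, F; F, C]) :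
    ∃ U : Matrix (Fin 2) (Fin 2) ℤ, IsUnit U ∧ ∃ B' F' C' : ℤ,
      Uᵀ * !![B, F; F, C] * U = !![B', F'; F', C'] ∧ 4 * F' ^ 2 ≤ B' ^ 2 ∧ B' ≤ C' := by
  induction hk : B.toNat + F.natAbs using Nat.strong_induction_on generalizing B F C with
  | _ k ih =>
  obtain ⟨hB, hC⟩ := hpos.fin_two_pos
  have reduce : ∀ T : Matrix (Fin 2) (Fin 2) ℤ, IsUnit T → ∀ B' F' C' : ℤ,
      Tᵀ * !![B, F; F, C] * T = !![B', F'; F', C'] → B'.toNat + F'.natAbs < k →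
      ∃ U : Matrix (Fin 2) (Fin 2) ℤ, IsUnit U ∧ ∃ B' F' C' : ℤ,
        Uᵀ * !![B, F; F, C] * U = !![B', F'; F', C'] ∧ 4 * F' ^ 2 ≤ B' ^ 2 ∧ B' ≤ C' := by
    intro T hT B' F' C' hM hlt
    obtain ⟨U, hU, B'', F'', C'', hU', hred⟩ :=
      ih _ hlt B' F' C' (hM ▸ hpos.transpose_mul_mul hT) rfl
    refine ⟨T * U, hT.mul hU, B'', F'', C'', ?_, hred⟩
    rw [← hU', ← hM]
    simp only [transpose_mul, Matrix.mul_assoc]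
  by_cases hF : 4 * F ^ 2 ≤ B ^ 2
  · by_cases hBC : B ≤ C
    · exact ⟨1, isUnit_one, B, F, C, by simp, hF, hBC⟩
    · refine reduce !![0, 1; 1, 0] ?_ C F B ?_ ?_
      · rw [isUnit_iff_isUnit_det]; simp
      · rw [transpose_mul_mul_fin_two]
        simp
      · omega
  · obtain ⟨x, hx⟩ := exists_four_mul_sq_le B F hB
    refine reduce !![1, x; 0, 1] ?_ B (F + B * x) (B * x ^ 2 + 2 * F * x + C) ?_ ?_
    · rw [isUnit_iff_isUnit_det]; simp
    · rw [transpose_mul_mul_fin_two]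
      ring_nf
    · have : (F + B * x).natAbs < F.natAbs := Int.natAbs_lt_iff_sq_lt.mpr (by linarith)
      omega

theorem exists_eq_transpose_mul_self_fin_two {B F C : ℤ} (hpos : IsPosForm !![B, F; F, C])
    (hdet : B * C - F ^ 2 = 1) : ∃ W : Matrix (Fin 2) (Fin 2) ℤ, !![B, F; F, C] = Wᵀ * W := by
  obtain ⟨U, hU, B', F', C', hM, hF', hBC'⟩ := exists_reduced_fin_two B F C hpos
  have hdet' := det_transpose_mul_mul_of_isUnit (A := !![B, F; F, C]) hU
  rw [hM, det_fin_two_of, det_fin_two_of] at hdet'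
  have hB' := (hM ▸ hpos.transpose_mul_mul hU).fin_two_pos.1
  have hF0 : F' = 0 := by nlinarith
  have hB1 : B' = 1 := by subst hF0; nlinarith
  have hC1 : C' = 1 := by subst hF0 hB1; linarith
  refine exists_eq_transpose_mul_self_of_transpose_mul_mul hU (V := 1) ?_
  rw [hM, hF0, hB1, hC1, ← one_fin_two, transpose_one, Matrix.one_mul]

theorem exists_three_mul_sq_le_fin_two {B F C : ℤ} (hpos : IsPosForm !![B, F; F, C]) :
    ∃ v : Fin 2 → ℤ, 0 < v ⬝ᵥ !![B, F; F, C] *ᵥ v ∧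
      3 * (v ⬝ᵥ !![B, F; F, C] *ᵥ v) ^ 2 ≤ 4 * (B * C - F ^ 2) := by
  obtain ⟨U, hU, B', F', C', hM, hF', hBC'⟩ := exists_reduced_fin_two B F C hpos
  have hdet' := det_transpose_mul_mul_of_isUnit (A := !![B, F; F, C]) hU
  rw [hM, det_fin_two_of, det_fin_two_of] at hdet'
  have hB' := (hM ▸ hpos.transpose_mul_mul hU).fin_two_pos.1
  have hval : (U *ᵥ ![1, 0]) ⬝ᵥ !![B, F; F, C] *ᵥ (U *ᵥ ![1, 0]) = B' := by
    rw [← dotProduct_mulVec_transpose_mul_mul, hM, dotProduct_mulVec_fin_two]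
    simp
  refine ⟨U *ᵥ ![1, 0], hval ▸ hB', ?_⟩
  rw [hval]
  nlinarith

end Binary

section Ternary

theorem Matrix.IsSymm.eq_fin_three {R : Type*} {A : Matrix (Fin 3) (Fin 3) R} (h : A.IsSymm) :
    A = !![A 0 0, A 0 1, A 0 2; A 0 1, A 1 1, A 1 2; A 0 2, A 1 2, A 2 2] := by
  have := eta_fin_three A
  rwa [h.apply 0 1, h.apply 0 2, h.apply 1 2] at this

theorem det_fin_three_of_isSymm (a b c d e f : ℤ) : !![a, d, e; d, b, f; e, f, c].det =
    a * b * c + 2 * d * e * f - a * f ^ 2 - b * e ^ 2 - c * d ^ 2 := by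
  simp [det_fin_three]
  ring

theorem dotProduct_mulVec_fin_three (a b c d e f : ℤ) (v : Fin 3 → ℤ) :
    v ⬝ᵥ !![a, d, e; d, b, f; e, f, c] *ᵥ v = a * v 0 ^ 2 + b * v 1 ^ 2 + c * v 2 ^ 2 +
      2 * d * v 0 * v 1 + 2 * e * v 0 * v 2 + 2 * f * v 1 * v 2 := by
  simp [dotProduct, mulVec, Fin.sum_univ_three]
  ring

theorem isPosForm_fin_three {a b c d e f : ℤ} (ha : 0 < a) (hab : 0 < a * b - d ^ 2)
    (hdet : 0 < !![a, d, e; d, b, f; e, f, c].det) : IsPosForm !![a, d, e; d, b, f; e, f, c] := by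
  intro v hv
  rw [det_fin_three_of_isSymm] at hdet
  rw [dotProduct_mulVec_fin_three]
  set x := v 0
  set y := v 1
  set z := v 2
  -- Lagrange's reduction of the form to a sum of squares
  have key : (a * b - d ^ 2) * a * (a * x ^ 2 + b * y ^ 2 + c * z ^ 2 + 2 * d * x * y +
      2 * e * x * z + 2 * f * y * z) = (a * b - d ^ 2) * (a * x + d * y + e * z) ^ 2 +
      ((a * b - d ^ 2) * y + (a * f - d * e) * z) ^ 2 +
      a * (a * b * c + 2 * d * e * f - a * f ^ 2 - b * e ^ 2 - c * d ^ 2) * z ^ 2 := by ring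
  have hP : 0 < (a * b - d ^ 2) * a * (a * x ^ 2 + b * y ^ 2 + c * z ^ 2 + 2 * d * x * y +
      2 * e * x * z + 2 * f * y * z) := by
    rw [key]
    by_cases hz : z = 0
    · by_cases hy : y = 0
      · have hx : x ≠ 0 := fun hx => hv (by ext i; fin_cases i <;> simp_all [x, y, z])
        have : 0 < (a * b - d ^ 2) * (a * x) ^ 2 := by positivity
        simp only [hy, hz] at this ⊢
        nlinarith
      · have : 0 < ((a * b - d ^ 2) * y) ^ 2 := by positivity
        simp only [hz] at this ⊢
        nlinarith
    · have : 0 < a * (a * b * c + 2 * d * e * f - a * f ^ 2 - b * e ^ 2 - c * d ^ 2) * z ^ 2 := by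
        positivity
      nlinarith [sq_nonneg ((a * b - d ^ 2) * y + (a * f - d * e) * z)]
  exact pos_of_mul_pos_right hP (by positivity)

theorem IsPosForm.schur {a b c d e f : ℤ} (h : IsPosForm !![a, d, e; d, b, f; e, f, c]) :
    IsPosForm !![a * b - d ^ 2, a * f - d * e; a * f - d * e, a * c - e ^ 2] := by
  intro v hv
  have ha : 0 < a := by simpa using h.diag_pos 0
  have hw : ![-(d * v 0 + e * v 1), a * v 0, a * v 1] ≠ 0 := by
    intro h0
    apply hv
    ext i
    fin_cases i
    · simpa [ha.ne'] using congrFun h0 1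
    · simpa [ha.ne'] using congrFun h0 2
  have hQ := h _ hw
  rw [dotProduct_mulVec_fin_three] at hQ
  -- `Q(-(d y + e z), a y, a z) = a q(y, z)`
  rw [dotProduct_mulVec_fin_two]
  have : 0 < a * ((a * b - d ^ 2) * v 0 ^ 2 + 2 * (a * f - d * e) * v 0 * v 1 +
      (a * c - e ^ 2) * v 1 ^ 2) := by
    convert hQ using 1
    simp
    ring
  exact pos_of_mul_pos_right this ha.le

theorem exists_pos_lt_of_det_eq_one {a b c d e f : ℤ}
    (hpos : IsPosForm !![a, d, e; d, b, f; e, f, c]) (hdet : !![a, d, e; d, b, f; e, f, c].det = 1)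
    (ha : 2 ≤ a) : ∃ v : Fin 3 → ℤ, 0 < v ⬝ᵥ !![a, d, e; d, b, f; e, f, c] *ᵥ v ∧
      v ⬝ᵥ !![a, d, e; d, b, f; e, f, c] *ᵥ v < a := by
  rw [det_fin_three_of_isSymm] at hdet
  obtain ⟨u, hu, hmin⟩ := exists_three_mul_sq_le_fin_two hpos.schur
  rw [dotProduct_mulVec_fin_two] at hu hmin
  set m := (a * b - d ^ 2) * u 0 ^ 2 + 2 * (a * f - d * e) * u 0 * u 1 +
    (a * c - e ^ 2) * u 1 ^ 2
  have hm : 3 * m ^ 2 ≤ 4 * a := by linear_combination hmin + 4 * a * hdet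
  obtain ⟨x, hx⟩ := exists_four_mul_sq_le a (d * u 0 + e * u 1) (by omega)
  refine ⟨![x, u 0, u 1], ?_⟩
  rw [dotProduct_mulVec_fin_three]
  simp only [cons_val_zero, cons_val_one, cons_val_two, head_cons, tail_cons]
  -- `(d y + e z + a x)² ≤ a² / 4` and `3 m² ≤ 4 a` force `a Q < a²`
  have key : a * (a * x ^ 2 + b * u 0 ^ 2 + c * u 1 ^ 2 + 2 * d * x * u 0 + 2 * e * x * u 1 +
      2 * f * u 0 * u 1) = (d * u 0 + e * u 1 + a * x) ^ 2 + m := by ring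
  constructor <;> nlinarith

theorem exists_eq_smul_isCoprime (v : Fin 3 → ℤ) : ∃ g x h y z : ℤ,
    v = g • ![x, h * y, h * z] ∧ IsCoprime y z ∧ IsCoprime x h := by
  obtain ⟨y, z, hy, hz, hyz⟩ := extract_gcd (v 1) (v 2)
  obtain ⟨x, h, hx, hh, hxh⟩ := extract_gcd (v 0) (gcd (v 1) (v 2))
  generalize gcd (v 1) (v 2) = k at *
  generalize gcd (v 0) k = g at *
  refine ⟨g, x, h, y, z, ?_, (gcd_isUnit_iff _ _).mp hyz, (gcd_isUnit_iff _ _).mp hxh⟩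
  ext i
  fin_cases i <;> simp
  · exact hx
  · linear_combination hy + y * hh
  · linear_combination hz + z * hh

theorem exists_det_eq_one_of_isCoprime {x h y z : ℤ} (hyz : IsCoprime y z) (hxh : IsCoprime x h) :
    ∃ U : Matrix (Fin 3) (Fin 3) ℤ, U.det = 1 ∧ Uᵀ 0 = ![x, h * y, h * z] := by
  obtain ⟨s, t, hst⟩ := hyz
  obtain ⟨u, w, huw⟩ := hxh
  refine ⟨!![x, -w, 0; h * y, u * y, -t; h * z, u * z, s], ?_, ?_⟩
  · simp [det_fin_three]
    linear_combination (h * w + x * u) * hst + huw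
  · ext i
    fin_cases i <;> simp

theorem exists_isUnit_transpose_mul_mul_lt {A : Matrix (Fin 3) (Fin 3) ℤ} (hA : A.IsSymm)
    (hpos : IsPosForm A) (hdet : A.det = 1) (ha : 2 ≤ A 0 0) :
    ∃ U : Matrix (Fin 3) (Fin 3) ℤ, IsUnit U ∧ (Uᵀ * A * U) 0 0 < A 0 0 := by
  obtain ⟨v, hv, hva⟩ : ∃ v, 0 < v ⬝ᵥ A *ᵥ v ∧ v ⬝ᵥ A *ᵥ v < A 0 0 := by
    rw [hA.eq_fin_three] at hpos hdet ha ⊢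
    exact exists_pos_lt_of_det_eq_one hpos hdet ha
  obtain ⟨g, x, h, y, z, rfl, hyz, hxh⟩ := exists_eq_smul_isCoprime v
  obtain ⟨U, hUdet, hU0⟩ := exists_det_eq_one_of_isCoprime hyz hxh
  refine ⟨U, (isUnit_iff_isUnit_det U).mpr (hUdet ▸ isUnit_one), ?_⟩
  rw [mul_mul_apply, hU0]
  simp only [mulVec_smul, dotProduct_smul, smul_dotProduct, smul_eq_mul, ← mul_assoc] at hv hva
  set q := ![x, h * y, h * z] ⬝ᵥ A *ᵥ ![x, h * y, h * z]
  have hq : 0 < q := pos_of_mul_pos_right hv (mul_self_nonneg g)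
  have hg : 0 < g * g := pos_of_mul_pos_left hv hq.le
  nlinarith

theorem exists_eq_transpose_mul_self_of_corner_eq_one {b c d e f : ℤ}
    (hpos : IsPosForm !![1, d, e; d, b, f; e, f, c])
    (hdet : !![1, d, e; d, b, f; e, f, c].det = 1) :
    ∃ U : Matrix (Fin 3) (Fin 3) ℤ, !![1, d, e; d, b, f; e, f, c] = Uᵀ * U := by
  rw [det_fin_three_of_isSymm] at hdet
  have hschur := hpos.schur
  simp only [one_mul] at hschur
  obtain ⟨W, hW⟩ := exists_eq_transpose_mul_self_fin_two hschur (by linear_combination hdet)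
  have hW' := fun i j => congrFun (congrFun hW i) j
  simp only [mul_apply, Fin.sum_univ_two, transpose_apply] at hW'
  have h00 := hW' 0 0
  have h01 := hW' 0 1
  have h11 := hW' 1 1
  simp at h00 h01 h11
  refine ⟨!![1, d, e; 0, W 0 0, W 0 1; 0, W 1 0, W 1 1], ?_⟩
  ext i j
  fin_cases i <;> fin_cases j <;> simp [mul_apply, Fin.sum_univ_three] <;> linarith

theorem exists_eq_transpose_mul_self_fin_three (A : Matrix (Fin 3) (Fin 3) ℤ) (hA : A.IsSymm)
    (hpos : IsPosForm A) (hdet : A.det = 1) : ∃ U : Matrix (Fin 3) (Fin 3) ℤ, A = Uᵀ * U := by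
  induction hk : (A 0 0).toNat using Nat.strong_induction_on generalizing A with
  | _ k ih =>
  rcases (show A 0 0 = 1 ∨ 2 ≤ A 0 0 by have := hpos.diag_pos 0; omega) with h1 | h2
  · rw [hA.eq_fin_three, h1] at hpos hdet ⊢
    exact exists_eq_transpose_mul_self_of_corner_eq_one hpos hdet
  · obtain ⟨U, hU, hlt⟩ := exists_isUnit_transpose_mul_mul_lt hA hpos hdet h2
    obtain ⟨V, hV⟩ := ih _ (by omega) _ (hA.transpose_mul_mul U) (hpos.transpose_mul_mul hU)
      (by rw [det_transpose_mul_mul_of_isUnit hU, hdet]) rfl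
    exact exists_eq_transpose_mul_self_of_transpose_mul_mul hU hV

end Ternary

theorem exists_dvd_mul_sq_add_one {N p : ℕ} [Fact p.Prime] (hN : (N : ZMod p) ≠ 0)
    (hsq : IsSquare (-(N : ZMod p))) : ∃ b : ℤ, (p : ℤ) ∣ N * b ^ 2 + 1 := by
  obtain ⟨h, hh⟩ := hsq
  obtain ⟨b, hb⟩ := ZMod.intCast_surjective (h * (N : ZMod p)⁻¹)
  refine ⟨b, (ZMod.intCast_zmod_eq_zero_iff_dvd _ p).mp ?_⟩
  push_cast
  rw [hb]
  linear_combination (-((N : ZMod p)⁻¹ ^ 2 * N)) * hh - ((N : ZMod p) * (N : ZMod p)⁻¹ + 1) *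
    mul_inv_cancel₀ hN

/- With `m = 2k + 1`, a prime `p ≡ 4k + 1 (mod 8m)` satisfies `p ≡ -1 (mod m)`,
`p ≡ 1 (mod 4)`, and `p ≡ 1` or `5 (mod 8)` according as `m ≡ 1` or `3 (mod 4)`;
so `J(-1 | p) = 1` and both `J(m | p)` and `J(2 | p)` equal `χ₄ m`. -/
theorem exists_prime_modEq_four_mul_add_one (k n : ℕ) :
    ∃ p > n, p.Prime ∧ p ≡ 4 * k + 1 [MOD 8 * (2 * k + 1)] := by
  refine Nat.forall_exists_prime_gt_and_modEq n (by omega)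
    (Nat.coprime_of_mul_modEq_one (4 * k + 1) ?_)
  rw [show (4 * k + 1) * (4 * k + 1) = 1 + 8 * (2 * k + 1) * k by ring]
  simp [Nat.ModEq]

section PrimeModEq

variable {k p : ℕ}

theorem mod_four_eq_one_of_modEq (hp : p ≡ 4 * k + 1 [MOD 8 * (2 * k + 1)]) : p % 4 = 1 := by
  have := hp.of_dvd (show 4 ∣ 8 * (2 * k + 1) from ⟨2 * (2 * k + 1), by ring⟩)
  unfold Nat.ModEq at this
  omega

theorem dvd_add_one_of_modEq {N : ℕ} (hp : p ≡ 4 * k + 1 [MOD 8 * (2 * k + 1)])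
    (hN : N ∣ 2 * (2 * k + 1)) : N ∣ p + 1 := by
  have := (hp.add_right 1).dvd_iff (dvd_trans hN ⟨4, by ring⟩)
  exact this.mpr (by rwa [show 4 * k + 1 + 1 = 2 * (2 * k + 1) by ring])

theorem jacobiSym_neg_one_of_modEq (hp : p ≡ 4 * k + 1 [MOD 8 * (2 * k + 1)]) :
    J(-1 | p) = 1 := by
  rw [jacobiSym.at_neg_one (Nat.odd_iff.mpr (by have := mod_four_eq_one_of_modEq hp; omega))]
  exact ZMod.χ₄_nat_one_mod_four (mod_four_eq_one_of_modEq hp)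

theorem jacobiSym_odd_of_modEq (hp : p ≡ 4 * k + 1 [MOD 8 * (2 * k + 1)]) :
    J(((2 * k + 1 : ℕ) : ℤ) | p) = ZMod.χ₄ ((2 * k + 1 : ℕ) : ZMod 4) := by
  have hodd : Odd (2 * k + 1) := odd_two_mul_add_one k
  rw [← jacobiSym.quadratic_reciprocity_one_mod_four (mod_four_eq_one_of_modEq hp) hodd,
    ← jacobiSym.at_neg_one hodd]
  apply jacobiSym.mod_left'
  rw [Int.emod_eq_emod_iff_emod_sub_eq_zero, sub_neg_eq_add]
  exact Int.emod_eq_zero_of_dvd (by exact_mod_cast dvd_add_one_of_modEq hp (dvd_mul_left _ 2))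

theorem jacobiSym_two_of_modEq (hp : p ≡ 4 * k + 1 [MOD 8 * (2 * k + 1)]) :
    J(2 | p) = ZMod.χ₄ ((2 * k + 1 : ℕ) : ZMod 4) := by
  have h8 := hp.of_dvd (show 8 ∣ 8 * (2 * k + 1) from dvd_mul_right _ _)
  unfold Nat.ModEq at h8
  rw [jacobiSym.at_two (Nat.odd_iff.mpr (by omega)), ZMod.χ₈_nat_mod_eight, h8,
    ZMod.χ₄_nat_mod_four]
  rcases Nat.even_or_odd k with ⟨j, rfl⟩ | ⟨j, rfl⟩
  · rw [show (4 * (j + j) + 1) % 8 = 1 by omega, show (2 * (j + j) + 1) % 4 = 1 by omega]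
    rfl
  · rw [show (4 * (2 * j + 1) + 1) % 8 = 5 by omega, show (2 * (2 * j + 1) + 1) % 4 = 3 by omega]
    rfl

end PrimeModEq

theorem exists_sum_three_sq_of_jacobiSym {N p : ℕ} [Fact p.Prime] (hNp : N < p)
    (hdvd : N ∣ p + 1) (hJ : J(-N | p) = 1) :
    ∃ x y z : ℤ, (N : ℤ) = x ^ 2 + y ^ 2 + z ^ 2 := by
  have hN : 0 < N := Nat.pos_of_ne_zero (by rintro rfl; simp at hdvd)
  have hNp' : (N : ZMod p) ≠ 0 := by
    rw [Ne, ZMod.natCast_eq_zero_iff]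
    exact fun h => absurd (Nat.le_of_dvd hN h) (by omega)
  obtain ⟨b, A, hA⟩ :=
    exists_dvd_mul_sq_add_one hNp' (by simpa using ZMod.isSquare_of_jacobiSym_eq_one hJ)
  obtain ⟨C, hC⟩ := hdvd
  have hC' : (p : ℤ) + 1 = N * C := by exact_mod_cast hC
  have hApos : 0 < A := by
    have : (0 : ℤ) < p := by exact_mod_cast (Fact.out : p.Prime).pos
    nlinarith
  -- the form N x² + A y² + C z² + 2 x z + 2 b y z has determinant A p - N b² = 1
  have hdet : !![(N : ℤ), 0, 1; 0, A, b; 1, b, C].det = 1 := by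
    rw [det_fin_three_of_isSymm]
    linear_combination (-A) * hC' - hA
  have hpos := isPosForm_fin_three (by exact_mod_cast hN) (by simp; positivity) (hdet ▸ one_pos)
  obtain ⟨U, hU⟩ := exists_eq_transpose_mul_self_fin_three _
    (IsSymm.ext fun i j => by fin_cases i <;> fin_cases j <;> rfl) hpos hdet
  refine ⟨U 0 0, U 1 0, U 2 0, ?_⟩
  have := congrFun (congrFun hU 0) 0
  simp [mul_apply, Fin.sum_univ_three] at this
  linear_combination this

theorem exists_sum_three_sq_of_mod_four_eq_one {N : ℕ} (hN : N % 4 = 1) :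
    ∃ x y z : ℤ, (N : ℤ) = x ^ 2 + y ^ 2 + z ^ 2 := by
  obtain ⟨k, rfl⟩ : ∃ k, N = 2 * k + 1 := ⟨N / 2, by omega⟩
  obtain ⟨p, hpN, hp, hpk⟩ := exists_prime_modEq_four_mul_add_one k (2 * k + 1)
  have := Fact.mk hp
  refine exists_sum_three_sq_of_jacobiSym hpN (dvd_add_one_of_modEq hpk (dvd_mul_left _ 2)) ?_
  rw [neg_eq_neg_one_mul, jacobiSym.mul_left, jacobiSym_neg_one_of_modEq hpk,
    jacobiSym_odd_of_modEq hpk, one_mul]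
  exact ZMod.χ₄_nat_one_mod_four hN

theorem exists_sum_three_sq_two_mul_of_odd {m : ℕ} (hm : Odd m) :
    ∃ x y z : ℤ, 2 * (m : ℤ) = x ^ 2 + y ^ 2 + z ^ 2 := by
  obtain ⟨k, rfl⟩ := hm
  obtain ⟨p, hpN, hp, hpk⟩ := exists_prime_modEq_four_mul_add_one k (2 * (2 * k + 1))
  have := Fact.mk hp
  have hJ : J(-((2 * (2 * k + 1) : ℕ) : ℤ) | p) = 1 := by
    rw [neg_eq_neg_one_mul, Nat.cast_mul, Nat.cast_two, jacobiSym.mul_left, jacobiSym.mul_left,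
      jacobiSym_neg_one_of_modEq hpk, jacobiSym_two_of_modEq hpk, jacobiSym_odd_of_modEq hpk,
      ZMod.χ₄_nat_eq_if_mod_four]
    split_ifs <;> omega
  exact_mod_cast exists_sum_three_sq_of_jacobiSym hpN (dvd_add_one_of_modEq hpk dvd_rfl) hJ

theorem sq_emod_two (t : ℤ) : t ^ 2 % 2 = t % 2 := by
  rcases Int.emod_two_eq_zero_or_one t with h | h <;> simp [pow_two, Int.mul_emod, h]

theorem floor_sq_div_two (z : ℤ) : ⌊(z ^ 2 : ℚ) / 2⌋ = z ^ 2 / 2 := by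
  have := Rat.floor_intCast_div_natCast (z ^ 2) 2
  push_cast at this
  exact this

theorem exists_sq_add_sq_eq_two_mul {x y : ℤ} (h : x % 2 = y % 2) :
    ∃ u v : ℤ, x ^ 2 + y ^ 2 = 2 * (u ^ 2 + v ^ 2) := by
  obtain ⟨u, hu⟩ : ∃ u, x + y = 2 * u := ⟨(x + y) / 2, by omega⟩
  obtain ⟨v, hv⟩ : ∃ v, x - y = 2 * v := ⟨(x - y) / 2, by omega⟩
  obtain ⟨rfl, rfl⟩ : x = u + v ∧ y = u - v := by omega
  exact ⟨u, v, by ring⟩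

theorem exists_eq_sq_add_sq_add_floor {n r x y z : ℤ} (hr : r = 0 ∨ r = 1)
    (h : 2 * n + r = x ^ 2 + y ^ 2 + z ^ 2) :
    ∃ u v w : ℤ, n = u ^ 2 + v ^ 2 + ⌊(w ^ 2 : ℚ) / 2⌋ := by
  obtain ⟨x, y, z, hsum, hxy, hz⟩ : ∃ x' y' z' : ℤ,
      x' ^ 2 + y' ^ 2 + z' ^ 2 = x ^ 2 + y ^ 2 + z ^ 2 ∧ x' % 2 = y' % 2 ∧ z' % 2 = r := by
    have := sq_emod_two x
    have := sq_emod_two y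
    have := sq_emod_two z
    rcases (by omega : (x % 2 = y % 2 ∧ z % 2 = r) ∨ (x % 2 = z % 2 ∧ y % 2 = r) ∨
        (y % 2 = z % 2 ∧ x % 2 = r)) with h | h | h
    exacts [⟨x, y, z, rfl, h⟩, ⟨x, z, y, by ring, h⟩, ⟨y, z, x, by ring, h⟩]
  obtain ⟨u, v, huv⟩ := exists_sq_add_sq_eq_two_mul hxy
  refine ⟨u, v, z, ?_⟩
  rw [floor_sq_div_two]
  have := sq_emod_two z
  omega

theorem stmt3 (n : ℕ) :
    ∃ x y z : ℤ, (n : ℤ) = x^2 + y^2 + ⌊(z^2 : ℚ)/2⌋ := by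
  rcases Nat.even_or_odd n with ⟨k, rfl⟩ | hn
  · obtain ⟨x, y, z, h⟩ :=
      exists_sum_three_sq_of_mod_four_eq_one (N := 2 * (k + k) + 1) (by omega)
    refine exists_eq_sq_add_sq_add_floor (x := x) (y := y) (z := z) (.inr rfl) ?_
    push_cast at h ⊢
    linarith
  · obtain ⟨x, y, z, h⟩ := exists_sum_three_sq_two_mul_of_odd hn
    exact exists_eq_sq_add_sq_add_floor (.inl rfl) (by rw [h, add_zero])
end

section
/- Every natural number n can be written as x(x+1) + y(y+1)/3 + ⌈z(z+1)/3⌉ for some integers x, y, z with 3 dividing y(y+1). -/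
/-!
Let `M = 12n + 5` for even `n` and `M = 12n + 1` for odd `n`, so `M ≡ 5 (mod 8)`, `3 ∤ M`.
Writing `M = p² + q² + 3r²` with `p, q, r` odd and `3 ∤ p`, one has `3r² = 12·x(x+1) + 3`,
`p² = 12·y(y+1)/3 + 1` for `y = 3K` where `p = ±(6K+1)`, and `q² = 12⌈z(z+1)/3⌉ + 1`
or `- 3` for `q = 2z + 1` according as `3 ∤ q` or `3 ∣ q`; comparing both sides gives `n`.

The representation of `M` by `x² + y² + 3z²` follows Dirichlet: a prime `q ≡ 1 (mod 12)`
with `q ≡ -1 (mod M)` makes `-3M` a square mod `q`, which yields a positive definite integral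
ternary form of determinant `3` representing `M`. Every such form is equivalent to
`x² + g(y, z)` with `g` a positive binary form of determinant `3`, i.e. to `x² + y² + 3z²`
or `x² + 2(y² + yz + z²)`, and the latter takes no value `≡ 5 (mod 8)`.
-/

open Matrix
open scoped NumberTheorySymbols

theorem Int.exists_abs_two_mul_add_le (a r : ℤ) (ha : 0 < a) :
    ∃ k, |2 * (a * k + r)| ≤ a := by
  have hdiv := Int.emod_add_mul_ediv r a
  have := Int.emod_nonneg r ha.ne'
  have := Int.emod_lt_of_pos r ha
  by_cases hs : 2 * (r % a) ≤ a
  · exact ⟨-(r / a), abs_le.mpr ⟨by linarith, by linarith⟩⟩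
  · exact ⟨-(r / a) - 1, abs_le.mpr ⟨by linarith, by linarith⟩⟩

namespace Matrix

variable {n : Type*} [Fintype n]

theorem dotProduct_transpose_mul_mul {R : Type*} [CommSemiring R] (P G : Matrix n n R)
    (v : n → R) : v ⬝ᵥ (Pᵀ * G * P) *ᵥ v = (P *ᵥ v) ⬝ᵥ G *ᵥ (P *ᵥ v) := by
  rw [← mulVec_mulVec, ← mulVec_mulVec, dotProduct_mulVec, vecMul_transpose]

theorem transpose_mul_mul_apply_self [DecidableEq n] {R : Type*} [CommSemiring R]
    (P G : Matrix n n R) (i : n) :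
    (Pᵀ * G * P) i i = (fun k ↦ P k i) ⬝ᵥ G *ᵥ (fun k ↦ P k i) := by
  have h := dotProduct_transpose_mul_mul P G (Pi.single i 1)
  rw [mulVec_single_one, single_dotProduct, one_mul, mulVec_single_one] at h
  exact h

theorem SpecialLinearGroup.isUnit_coe [DecidableEq n] {R : Type*} [CommRing R]
    (P : SpecialLinearGroup n R) : IsUnit (P : Matrix n n R) :=
  (isUnit_iff_isUnit_det _).mpr (by simp)

theorem PosDef.eq_fin_two {G : Matrix (Fin 2) (Fin 2) ℤ} (hG : G.PosDef) :
    G = !![G 0 0, G 0 1; G 0 1, G 1 1] := by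
  have h := hG.1.apply 1 0
  ext i j
  fin_cases i <;> fin_cases j <;> simp_all

theorem PosDef.eq_fin_three {G : Matrix (Fin 3) (Fin 3) ℤ} (hG : G.PosDef) :
    G = !![G 0 0, G 0 1, G 0 2; G 0 1, G 1 1, G 1 2; G 0 2, G 1 2, G 2 2] := by
  have h₁ := hG.1.apply 1 0
  have h₂ := hG.1.apply 2 0
  have h₃ := hG.1.apply 2 1
  ext i j
  fin_cases i <;> fin_cases j <;> simp_all

end Matrix

namespace IntegralForm

variable {n : Type*} [Fintype n] [DecidableEq n]

def Represents (G : Matrix n n ℤ) (N : ℤ) : Prop :=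
  ∃ v ≠ 0, v ⬝ᵥ G *ᵥ v = N

def IsEquiv (G H : Matrix n n ℤ) : Prop :=
  ∃ P : SpecialLinearGroup n ℤ, H = (P : Matrix n n ℤ)ᵀ * G * P

theorem IsEquiv.refl (G : Matrix n n ℤ) : IsEquiv G G :=
  ⟨1, by simp⟩

theorem IsEquiv.trans {G H K : Matrix n n ℤ} (hGH : IsEquiv G H) (hHK : IsEquiv H K) :
    IsEquiv G K := by
  obtain ⟨P, rfl⟩ := hGH
  obtain ⟨Q, rfl⟩ := hHK
  exact ⟨P * Q, by simp [Matrix.mul_assoc]⟩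

theorem IsEquiv.symm {G H : Matrix n n ℤ} (h : IsEquiv G H) : IsEquiv H G := by
  obtain ⟨P, rfl⟩ := h
  have hP : (P : Matrix n n ℤ) * ((P⁻¹ : SpecialLinearGroup n ℤ) : Matrix n n ℤ) = 1 := by
    simp [mul_adjugate]
  refine ⟨P⁻¹, ?_⟩
  rw [← Matrix.mul_assoc, ← Matrix.mul_assoc, ← transpose_mul, Matrix.mul_assoc, hP,
    transpose_one, Matrix.one_mul, Matrix.mul_one]

theorem IsEquiv.det_eq {G H : Matrix n n ℤ} (h : IsEquiv G H) : H.det = G.det := by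
  obtain ⟨P, rfl⟩ := h
  simp [det_mul, det_transpose]

theorem IsEquiv.posDef {G H : Matrix n n ℤ} (h : IsEquiv G H) (hG : G.PosDef) : H.PosDef := by
  obtain ⟨P, rfl⟩ := h
  rw [← conjTranspose_eq_transpose_of_trivial]
  exact hG.conjTranspose_mul_mul_same (mulVec_injective_of_isUnit (SpecialLinearGroup.isUnit_coe P))

theorem IsEquiv.represents {G H : Matrix n n ℤ} (h : IsEquiv G H) {N : ℤ}
    (hN : Represents H N) : Represents G N := by
  obtain ⟨P, rfl⟩ := h
  obtain ⟨v, hv, rfl⟩ := hN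
  refine ⟨P *ᵥ v, ?_, (dotProduct_transpose_mul_mul (P : Matrix n n ℤ) G v).symm⟩
  exact fun h0 ↦ hv (mulVec_injective_of_isUnit (SpecialLinearGroup.isUnit_coe P) (h0.trans (mulVec_zero _).symm))

theorem exists_isEquiv_forall_isEquiv_apply_le (G : Matrix n n ℤ) (hG : G.PosDef) (i : n) :
    ∃ H, IsEquiv G H ∧ ∀ H', IsEquiv H H' → H i i ≤ H' i i := by
  obtain ⟨m, ⟨H, hGH, rfl⟩, hmin⟩ :=
    Int.exists_least_of_bdd (P := fun m ↦ ∃ H, IsEquiv G H ∧ H i i = m)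
      ⟨0, by rintro _ ⟨H, hGH, rfl⟩; exact (hGH.posDef hG).diag_pos.le⟩
      ⟨G i i, G, IsEquiv.refl G, rfl⟩
  exact ⟨H, hGH, fun H' hHH' ↦ hmin _ ⟨H', hGH.trans hHH', rfl⟩⟩

theorem dotProduct_mulVec_fin_two (a b c : ℤ) (v : Fin 2 → ℤ) :
    v ⬝ᵥ !![a, b; b, c] *ᵥ v = a * v 0 ^ 2 + 2 * b * v 0 * v 1 + c * v 1 ^ 2 := by
  simp only [dotProduct, mulVec, of_apply, cons_val', cons_val_fin_one, Fin.sum_univ_two,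
    cons_val_zero, cons_val_one]
  ring

theorem dotProduct_mulVec_fin_three (a b c d e f : ℤ) (v : Fin 3 → ℤ) :
    v ⬝ᵥ !![a, d, e; d, b, f; e, f, c] *ᵥ v = a * v 0 ^ 2 + b * v 1 ^ 2 + c * v 2 ^ 2 +
      2 * d * v 0 * v 1 + 2 * e * v 0 * v 2 + 2 * f * v 1 * v 2 := by
  simp only [dotProduct, mulVec, of_apply, cons_val', cons_val_fin_one, Fin.sum_univ_three,
    cons_val_zero, cons_val_one, cons_val]
  ring

theorem exists_isEquiv_reduced (G : Matrix (Fin 2) (Fin 2) ℤ) (hG : G.PosDef) :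
    ∃ a b c : ℤ, IsEquiv G !![a, b; b, c] ∧ 2 * |b| ≤ a ∧ a ≤ c := by
  obtain ⟨H, hGH, hmin⟩ := exists_isEquiv_forall_isEquiv_apply_le G hG 0
  have hH := hGH.posDef hG
  obtain ⟨k, hk⟩ := Int.exists_abs_two_mul_add_le (H 0 0) (H 0 1) hH.diag_pos
  let S : SpecialLinearGroup (Fin 2) ℤ := ⟨!![1, k; 0, 1], by simp [det_fin_two]⟩
  let W : SpecialLinearGroup (Fin 2) ℤ := ⟨!![0, -1; 1, 0], by simp [det_fin_two]⟩
  set c := H 0 0 * k ^ 2 + 2 * H 0 1 * k + H 1 1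
  have hS : (S : Matrix (Fin 2) (Fin 2) ℤ)ᵀ * H * S =
      !![H 0 0, H 0 0 * k + H 0 1; H 0 0 * k + H 0 1, c] := by
    rw [hH.eq_fin_two]
    ext i j
    fin_cases i <;> fin_cases j <;>
      simp only [S, c, Fin.zero_eta, Fin.mk_one, mul_apply, transpose_apply, of_apply, cons_val',
        cons_val_zero, cons_val_one, cons_val_fin_one, Fin.sum_univ_two] <;> ring
  have hc := hmin _ (IsEquiv.trans ⟨S, hS.symm⟩ ⟨W, rfl⟩)
  simp only [W, mul_apply, transpose_apply, of_apply, cons_val', cons_val_zero, cons_val_one,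
    cons_val_fin_one, Fin.sum_univ_two, zero_mul, one_mul, zero_add, mul_zero, mul_one] at hc
  exact ⟨H 0 0, H 0 0 * k + H 0 1, c, hGH.trans ⟨S, hS.symm⟩,
    by rwa [← abs_two, ← abs_mul], hc⟩

theorem three_mul_sq_le_four_mul_det {a b c : ℤ} (hb : 2 * |b| ≤ a) (hac : a ≤ c) :
    3 * a ^ 2 ≤ 4 * (!![a, b; b, c]).det := by
  rw [det_fin_two_of]
  nlinarith [sq_abs b, abs_nonneg b]

theorem represents_fin_two_of_det_eq_three {G : Matrix (Fin 2) (Fin 2) ℤ} (hG : G.PosDef)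
    (hdet : G.det = 3) {N : ℤ} (hN : Represents G N) :
    (∃ y z, N = y ^ 2 + 3 * z ^ 2) ∨ ∃ y z, N = 2 * y ^ 2 + 2 * y * z + 2 * z ^ 2 := by
  obtain ⟨a, b, c, hGH, hb, hac⟩ := exists_isEquiv_reduced G hG
  have hdet' : a * c - b * b = 3 := by rw [← hdet, ← hGH.det_eq, det_fin_two_of]
  have hHermite := three_mul_sq_le_four_mul_det hb hac
  rw [det_fin_two_of, hdet'] at hHermite
  have hb' : -a ≤ 2 * b ∧ 2 * b ≤ a := abs_le.mp (by rwa [abs_mul, abs_two])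
  have ha : 0 < a := by nlinarith
  have ha2 : a ≤ 2 := by nlinarith
  obtain ⟨v, -, rfl⟩ := hGH.symm.represents hN
  rw [dotProduct_mulVec_fin_two]
  interval_cases a
  · obtain rfl : b = 0 := by omega
    obtain rfl : c = 3 := by omega
    exact .inl ⟨v 0, v 1, by ring⟩
  · have hb0 : b ≠ 0 := by rintro rfl; omega
    obtain rfl | rfl : b = -1 ∨ b = 1 := by omega
    · obtain rfl : c = 2 := by omega
      exact .inr ⟨v 0, -v 1, by ring⟩
    · obtain rfl : c = 2 := by omega
      exact .inr ⟨v 0, v 1, by ring⟩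

/-- `H 0 0` times the Schur complement of the entry `H 0 0`; the factor keeps it integral. -/
def scaledSchurComplement (H : Matrix (Fin 3) (Fin 3) ℤ) : Matrix (Fin 2) (Fin 2) ℤ :=
  !![H 0 0 * H 1 1 - H 0 1 ^ 2, H 0 0 * H 1 2 - H 0 1 * H 0 2;
     H 0 0 * H 1 2 - H 0 1 * H 0 2, H 0 0 * H 2 2 - H 0 2 ^ 2]

theorem apply_zero_zero_mul_dotProduct_mulVec {H : Matrix (Fin 3) (Fin 3) ℤ} (hH : H.PosDef)
    (v : Fin 3 → ℤ) :
    H 0 0 * (v ⬝ᵥ H *ᵥ v) = (H 0 0 * v 0 + H 0 1 * v 1 + H 0 2 * v 2) ^ 2 +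
      ![v 1, v 2] ⬝ᵥ scaledSchurComplement H *ᵥ ![v 1, v 2] := by
  conv_lhs => enter [2]; rw [hH.eq_fin_three]
  rw [dotProduct_mulVec_fin_three, scaledSchurComplement, dotProduct_mulVec_fin_two]
  simp only [cons_val_zero, cons_val_one]
  ring

theorem det_scaledSchurComplement {H : Matrix (Fin 3) (Fin 3) ℤ} (hH : H.PosDef) :
    (scaledSchurComplement H).det = H 0 0 * H.det := by
  conv_rhs => rw [hH.eq_fin_three]
  rw [scaledSchurComplement, det_fin_two_of, det_fin_three]
  simp only [of_apply, cons_val', cons_val_zero, cons_val_fin_one, cons_val_one, cons_val]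
  ring

theorem posDef_scaledSchurComplement {H : Matrix (Fin 3) (Fin 3) ℤ} (hH : H.PosDef) :
    (scaledSchurComplement H).PosDef := by
  refine .of_dotProduct_mulVec_pos ?_ fun w hw ↦ ?_
  · ext i j
    fin_cases i <;> fin_cases j <;> simp [scaledSchurComplement]
  have hm : 0 < H 0 0 := hH.diag_pos
  let v : Fin 3 → ℤ := ![-(H 0 1 * w 0 + H 0 2 * w 1), H 0 0 * w 0, H 0 0 * w 1]
  have hv : v ≠ 0 := by
    intro h0
    apply hw
    ext i
    fin_cases i
    · simpa [v, hm.ne'] using congrFun h0 1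
    · simpa [v, hm.ne'] using congrFun h0 2
  have hpos := hH.dotProduct_mulVec_pos hv
  have key := apply_zero_zero_mul_dotProduct_mulVec hH v
  rw [show v 0 = -(H 0 1 * w 0 + H 0 2 * w 1) from rfl, show v 1 = H 0 0 * w 0 from rfl,
    show v 2 = H 0 0 * w 1 from rfl] at key
  rw [star_trivial] at hpos ⊢
  rw [scaledSchurComplement, dotProduct_mulVec_fin_two] at key ⊢
  simp only [cons_val_zero, cons_val_one] at key ⊢
  refine pos_of_mul_pos_right (a := H 0 0 ^ 2) ?_ (sq_nonneg _)
  calc 0 < H 0 0 * (v ⬝ᵥ H *ᵥ v) := mul_pos hm hpos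
    _ = _ := by rw [key]; ring

theorem exists_col_zero_eq (x : ℤ) (R : SpecialLinearGroup (Fin 2) ℤ) :
    ∃ P : SpecialLinearGroup (Fin 3) ℤ,
      (fun k ↦ (P : Matrix (Fin 3) (Fin 3) ℤ) k 0) = ![x, R 0 0, R 1 0] := by
  have hR := R.det_coe
  rw [det_fin_two] at hR
  refine ⟨⟨!![x, -1, 0; R 0 0, 0, R 0 1; R 1 0, 0, R 1 1], ?_⟩, ?_⟩
  · simp only [det_fin_three, of_apply, cons_val', cons_val_zero, cons_val_one, cons_val,
      cons_val_fin_one]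
    linarith
  · ext k
    fin_cases k <;> rfl

theorem exists_isEquiv_apply_zero_zero_eq_one {G : Matrix (Fin 3) (Fin 3) ℤ} (hG : G.PosDef)
    (hdet : G.det = 3) : ∃ H, IsEquiv G H ∧ H 0 0 = 1 := by
  -- With `m = H 0 0` least in the class, Hermite's bound for the Schur complement gives
  -- `3a² ≤ 12m`, and minimality of `m` at a vector above `(R 0 0, R 1 0)` gives `3m² ≤ 4a`.
  obtain ⟨H, hGH, hmin⟩ := exists_isEquiv_forall_isEquiv_apply_le G hG 0
  have hH := hGH.posDef hG
  have hm : 0 < H 0 0 := hH.diag_pos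
  refine ⟨H, hGH, ?_⟩
  obtain ⟨a, b, c, ⟨R, hR⟩, hb, hac⟩ :=
    exists_isEquiv_reduced _ (posDef_scaledSchurComplement hH)
  have hdetR : (!![a, b; b, c]).det = 3 * H 0 0 := by
    rw [IsEquiv.det_eq ⟨R, hR⟩, det_scaledSchurComplement hH, hGH.det_eq, hdet, mul_comm]
  have hHermite := hdetR ▸ three_mul_sq_le_four_mul_det hb hac
  have ha : a = ![R 0 0, R 1 0] ⬝ᵥ scaledSchurComplement H *ᵥ ![R 0 0, R 1 0] := by
    have hcol : (fun k ↦ (R : Matrix (Fin 2) (Fin 2) ℤ) k 0) = ![R 0 0, R 1 0] := by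
      ext k; fin_cases k <;> rfl
    have h := congrFun (congrFun hR 0) 0
    rwa [transpose_mul_mul_apply_self, hcol] at h
  obtain ⟨x, hx⟩ := Int.exists_abs_two_mul_add_le (H 0 0) (H 0 1 * R 0 0 + H 0 2 * R 1 0) hm
  obtain ⟨P, hP⟩ := exists_col_zero_eq x R
  have hle : H 0 0 ≤ ![x, R 0 0, R 1 0] ⬝ᵥ H *ᵥ ![x, R 0 0, R 1 0] := by
    have h : H 0 0 ≤ ((P : Matrix (Fin 3) (Fin 3) ℤ)ᵀ * H * P) 0 0 := hmin _ ⟨P, rfl⟩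
    rwa [transpose_mul_mul_apply_self, hP] at h
  have key := apply_zero_zero_mul_dotProduct_mulVec hH ![x, R 0 0, R 1 0]
  simp only [cons_val_zero, cons_val_one, cons_val_two, head_cons, tail_cons, ← ha] at key
  have hm₁ : 3 * H 0 0 ^ 2 ≤ 4 * a := by
    nlinarith [sq_abs (2 * (H 0 0 * x + (H 0 1 * R 0 0 + H 0 2 * R 1 0))),
      abs_nonneg (2 * (H 0 0 * x + (H 0 1 * R 0 0 + H 0 2 * R 1 0)))]
  have hm₂ : 9 * H 0 0 ^ 4 ≤ 64 * H 0 0 := by nlinarith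
  by_contra hne
  have hm₃ : 8 ≤ H 0 0 ^ 3 := by nlinarith [(by omega : 2 ≤ H 0 0)]
  nlinarith

theorem represents_fin_three_of_det_eq_three {G : Matrix (Fin 3) (Fin 3) ℤ} (hG : G.PosDef)
    (hdet : G.det = 3) {N : ℤ} (hN : Represents G N) :
    (∃ x y z, N = x ^ 2 + y ^ 2 + 3 * z ^ 2) ∨
      ∃ x y z, N = x ^ 2 + 2 * y ^ 2 + 2 * y * z + 2 * z ^ 2 := by
  obtain ⟨H, hGH, hH1⟩ := exists_isEquiv_apply_zero_zero_eq_one hG hdet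
  have hH := hGH.posDef hG
  obtain ⟨v, -, rfl⟩ := hGH.symm.represents hN
  have key := apply_zero_zero_mul_dotProduct_mulVec hH v
  rw [hH1, one_mul, one_mul] at key
  rw [key]
  set s := v 0 + H 0 1 * v 1 + H 0 2 * v 2
  by_cases hw : ![v 1, v 2] = 0
  · exact .inl ⟨s, 0, 0, by simp [hw]⟩
  have hdetS : (scaledSchurComplement H).det = 3 := by
    rw [det_scaledSchurComplement hH, hH1, hGH.det_eq, hdet, one_mul]
  rcases represents_fin_two_of_det_eq_three (posDef_scaledSchurComplement hH) hdetS
    ⟨_, hw, rfl⟩ with ⟨y, z, h⟩ | ⟨y, z, h⟩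
  · exact .inl ⟨s, y, z, by rw [h]; ring⟩
  · exact .inr ⟨s, y, z, by rw [h]; ring⟩

end IntegralForm

theorem Nat.sq_mod_twelve_eq_one {M : ℕ} (h2 : M % 2 = 1) (h3 : M % 3 ≠ 0) :
    M ^ 2 % 12 = 1 := by
  have h : M % 12 = 1 ∨ M % 12 = 5 ∨ M % 12 = 7 ∨ M % 12 = 11 := by omega
  rw [Nat.pow_mod]
  rcases h with h | h | h | h <;> rw [h]

theorem Nat.exists_prime_mod_twelve_eq_one_dvd_add_one (M : ℕ) (h2 : M % 2 = 1)
    (h3 : M % 3 ≠ 0) : ∃ q, q.Prime ∧ M < q ∧ q % 12 = 1 ∧ M ∣ q + 1 := by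
  obtain ⟨t, ht⟩ : ∃ t, M ^ 2 = 12 * t + 1 :=
    ⟨M ^ 2 / 12, by have := Nat.sq_mod_twelve_eq_one h2 h3; omega⟩
  have : NeZero (12 * M) := ⟨by omega⟩
  -- `2M² - 1` is `1` mod `12` and `-1` mod `M`, and is its own inverse mod `12M`.
  have hunit : IsUnit (2 * M ^ 2 - 1 : ZMod (12 * M)) := by
    refine IsUnit.of_mul_eq_one (2 * M ^ 2 - 1 : ZMod (12 * M)) ?_
    have h0 : ((12 * M : ℕ) : ZMod (12 * M)) = 0 := ZMod.natCast_self _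
    have ht' : (M : ZMod (12 * M)) ^ 2 = 12 * t + 1 := by
      exact_mod_cast congrArg (Nat.cast : ℕ → ZMod (12 * M)) ht
    push_cast at h0
    linear_combination (4 * (M : ZMod (12 * M)) ^ 2) * ht' + (4 * M * t : ZMod (12 * M)) * h0
  obtain ⟨q, hqM, hq, hqa⟩ := Nat.forall_exists_prime_gt_and_eq_mod hunit M
  have hmod : q + 1 ≡ 2 * M ^ 2 [MOD 12 * M] := by
    rw [← ZMod.natCast_eq_natCast_iff]
    push_cast
    rw [hqa]
    ring
  refine ⟨q, hq, hqM, ?_,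
    ((hmod.of_mul_left 12).dvd_iff dvd_rfl).mpr (Dvd.intro (2 * M) (by ring))⟩
  have h12 := hmod.of_mul_right M
  unfold Nat.ModEq at h12
  omega

theorem ZMod.isSquare_neg_three_mul {q M : ℕ} [Fact q.Prime] (hq : q % 12 = 1) (hM : M % 4 = 1)
    (hMq : M ∣ q + 1) : IsSquare ((-3 * M : ℤ) : ZMod q) := by
  have hq4 : q % 4 = 1 := by omega
  have hqodd : Odd q := Nat.odd_iff.mpr (by omega)
  have hJ₁ : J(-1 | q) = 1 := by
    rw [jacobiSym.at_neg_one hqodd, ZMod.χ₄_nat_one_mod_four hq4]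
  have hJ₃ : J(3 | q) = 1 := by
    rw [show (3 : ℤ) = (3 : ℕ) from rfl,
      jacobiSym.quadratic_reciprocity_one_mod_four' (by decide) hq4,
      jacobiSym.mod_left' (b := 3) (a₂ := 1) (by omega), jacobiSym.one_left]
  have hJM : J(M | q) = 1 := by
    rw [jacobiSym.quadratic_reciprocity_one_mod_four hM hqodd,
      jacobiSym.mod_left' (a₂ := -1) ?_, jacobiSym.at_neg_one (Nat.odd_iff.mpr (by omega)),
      ZMod.χ₄_nat_one_mod_four hM]
    exact (Int.modEq_iff_dvd.mpr (by rw [sub_neg_eq_add]; exact_mod_cast hMq)).symm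
  apply ZMod.isSquare_of_jacobiSym_eq_one
  rw [show (-3 * M : ℤ) = -1 * 3 * M by ring, jacobiSym.mul_left, jacobiSym.mul_left,
    hJ₁, hJ₃, hJM]
  rfl

namespace IntegralForm

theorem posDef_of_mul_eq_add_one {M q s u T : ℤ} (hM : 0 < M) (hq : 0 < q)
    (hs : M * s = q + 1) (hu : q * u = M * T ^ 2 + 3) :
    (!![M, 1, 0; 1, s, T; 0, T, u]).PosDef := by
  refine .of_dotProduct_mulVec_pos ?_ fun v hv ↦ ?_
  · ext i j
    fin_cases i <;> fin_cases j <;> simp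
  rw [star_trivial, dotProduct_mulVec_fin_three]
  set Q := M * v 0 ^ 2 + s * v 1 ^ 2 + u * v 2 ^ 2 + 2 * 1 * v 0 * v 1 + 2 * 0 * v 0 * v 2 +
    2 * T * v 1 * v 2
  have hid :
      M * q * Q = q * (M * v 0 + v 1) ^ 2 + (q * v 1 + M * T * v 2) ^ 2 + 3 * M * v 2 ^ 2 := by
    linear_combination (q * v 1 ^ 2) * hs + (M * v 2 ^ 2) * hu
  by_contra! hle
  have h1 : q * (M * v 0 + v 1) ^ 2 + (q * v 1 + M * T * v 2) ^ 2 + 3 * M * v 2 ^ 2 ≤ 0 :=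
    hid ▸ mul_nonpos_of_nonneg_of_nonpos (mul_pos hM hq).le hle
  have e₁ : q * (M * v 0 + v 1) ^ 2 = 0 := by nlinarith [sq_nonneg (M * v 0 + v 1)]
  have e₂ : (q * v 1 + M * T * v 2) ^ 2 = 0 := by nlinarith [sq_nonneg (q * v 1 + M * T * v 2)]
  have e₃ : 3 * M * v 2 ^ 2 = 0 := by nlinarith [sq_nonneg (v 2)]
  simp only [mul_eq_zero, hq.ne', hM.ne', OfNat.ofNat_ne_zero, pow_eq_zero_iff, ne_eq,
    not_false_eq_true, false_or, or_self] at e₁ e₂ e₃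
  simp only [e₃, mul_zero, add_zero, mul_eq_zero, hq.ne', false_or] at e₂
  simp only [e₂, add_zero, mul_eq_zero, hM.ne', false_or] at e₁
  exact hv (by ext i; fin_cases i <;> simp [e₁, e₂, e₃])

theorem exists_posDef_det_eq_three_represents (M : ℕ) (h4 : M % 4 = 1) (h3 : M % 3 ≠ 0) :
    ∃ G : Matrix (Fin 3) (Fin 3) ℤ, G.PosDef ∧ G.det = 3 ∧ Represents G M := by
  obtain ⟨q, hq, hMq, hq12, hdvd⟩ :=
    Nat.exists_prime_mod_twelve_eq_one_dvd_add_one M (by omega) h3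
  have := Fact.mk hq
  obtain ⟨r, hr⟩ := ZMod.isSquare_neg_three_mul hq12 h4 hdvd
  have hM0 : (M : ZMod q) ≠ 0 := by
    rw [Ne, ZMod.natCast_eq_zero_iff]
    exact fun h ↦ absurd (Nat.le_of_dvd (by omega) h) (by omega)
  obtain ⟨T, hT⟩ := ZMod.intCast_surjective (r * (M : ZMod q)⁻¹)
  obtain ⟨u, hu⟩ : (q : ℤ) ∣ M * T ^ 2 + 3 := by
    rw [← ZMod.intCast_zmod_eq_zero_iff_dvd]
    push_cast
    rw [hT]
    push_cast at hr
    linear_combination (-(M : ZMod q) * (M : ZMod q)⁻¹ ^ 2) * hr -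
      3 * ((M : ZMod q) * (M : ZMod q)⁻¹ + 1) * mul_inv_cancel₀ hM0
  obtain ⟨s, hs⟩ := hdvd
  have hs' : (q : ℤ) + 1 = M * s := by exact_mod_cast hs
  refine ⟨!![(M : ℤ), 1, 0; 1, s, T; 0, T, u],
    posDef_of_mul_eq_add_one (q := q) (by omega) (by omega) hs'.symm hu.symm, ?_, ?_⟩
  · simp only [det_fin_three, of_apply, cons_val', cons_val_zero, cons_val_fin_one, cons_val_one,
      cons_val]
    linear_combination (-u) * hs' - hu
  · refine ⟨![1, 0, 0], by simp, ?_⟩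
    rw [dotProduct_mulVec_fin_three]
    simp

end IntegralForm

theorem exists_eq_sq_add_sq_add_three_mul_sq (M : ℕ) (h8 : M % 8 = 5) (h3 : M % 3 ≠ 0) :
    ∃ x y z : ℤ, (M : ℤ) = x ^ 2 + y ^ 2 + 3 * z ^ 2 := by
  obtain ⟨G, hG, hdet, hM⟩ :=
    IntegralForm.exists_posDef_det_eq_three_represents M (by omega) h3
  refine (IntegralForm.represents_fin_three_of_det_eq_three hG hdet hM).resolve_right ?_
  have hmod8 : ∀ a b c : ZMod 8, a ^ 2 + 2 * b ^ 2 + 2 * b * c + 2 * c ^ 2 ≠ 5 := by decide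
  rintro ⟨x, y, z, h⟩
  apply hmod8 x y z
  have h' := congrArg (Int.cast : ℤ → ZMod 8) h
  push_cast at h'
  rw [← h', ← ZMod.natCast_mod, h8]
  rfl

theorem Int.sq_emod_eight (x : ℤ) :
    x % 2 = 1 ∧ x ^ 2 % 8 = 1 ∨ x % 4 = 0 ∧ x ^ 2 % 8 = 0 ∨
      x % 4 = 2 ∧ x ^ 2 % 8 = 4 := by
  have h : x ^ 2 % 8 = (x % 8) ^ 2 % 8 := by rw [sq, sq, Int.mul_emod]
  have : 0 ≤ x % 8 := Int.emod_nonneg x (by norm_num)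
  have : x % 8 < 8 := Int.emod_lt_of_pos x (by norm_num)
  interval_cases hx : x % 8 <;> omega

theorem exists_odd_sq_add_three_mul_sq_eq {y z : ℤ}
    (h : y % 4 = 0 ∧ z % 4 = 2 ∨ y % 4 = 2 ∧ z % 4 = 0) :
    ∃ q r : ℤ, Odd q ∧ Odd r ∧ y ^ 2 + 3 * z ^ 2 = q ^ 2 + 3 * r ^ 2 := by
  obtain ⟨a, rfl⟩ : ∃ a, y = 2 * a := ⟨y / 2, by omega⟩
  obtain ⟨b, rfl⟩ : ∃ b, z = 2 * b := ⟨z / 2, by omega⟩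
  exact ⟨a - 3 * b, a + b, Int.odd_iff.mpr (by omega), Int.odd_iff.mpr (by omega), by ring⟩

theorem exists_odd_of_emod_eight_eq_five {M x y z : ℤ} (h8 : M % 8 = 5)
    (h : M = x ^ 2 + y ^ 2 + 3 * z ^ 2) :
    ∃ p q r : ℤ, Odd p ∧ Odd q ∧ Odd r ∧ M = p ^ 2 + q ^ 2 + 3 * r ^ 2 := by
  have hx := Int.sq_emod_eight x
  have hy := Int.sq_emod_eight y
  have hz := Int.sq_emod_eight z
  by_cases hxo : x % 2 = 1
  · by_cases hyo : y % 2 = 1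
    · exact ⟨x, y, z, Int.odd_iff.mpr hxo, Int.odd_iff.mpr hyo, Int.odd_iff.mpr (by omega), h⟩
    · obtain ⟨q, r, hq, hr, hqr⟩ :=
        exists_odd_sq_add_three_mul_sq_eq (y := y) (z := z) (by omega)
      exact ⟨x, q, r, Int.odd_iff.mpr hxo, hq, hr, by linarith⟩
  · obtain ⟨q, r, hq, hr, hqr⟩ :=
      exists_odd_sq_add_three_mul_sq_eq (y := x) (z := z) (by omega)
    exact ⟨y, q, r, Int.odd_iff.mpr (by omega), hq, hr, by linarith⟩

theorem exists_odd_eq_sq_add_sq_add_three_mul_sq (M : ℕ) (h8 : M % 8 = 5) (h3 : M % 3 ≠ 0) :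
    ∃ p q r : ℤ, Odd p ∧ Odd q ∧ Odd r ∧ ¬3 ∣ p ∧
      (M : ℤ) = p ^ 2 + q ^ 2 + 3 * r ^ 2 := by
  obtain ⟨x, y, z, h⟩ := exists_eq_sq_add_sq_add_three_mul_sq M h8 h3
  obtain ⟨p, q, r, hp, hq, hr, hM⟩ := exists_odd_of_emod_eight_eq_five (by omega) h
  by_cases hp3 : 3 ∣ p
  · have hq3 : ¬3 ∣ q := fun hq3 ↦ by
      have : (3 : ℤ) ∣ M := hM ▸ dvd_add (dvd_add (dvd_pow hp3 two_ne_zero)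
        (dvd_pow hq3 two_ne_zero)) (dvd_mul_right 3 _)
      omega
    exact ⟨q, p, r, hq, hp, hr, hq3, by rw [hM]; ring⟩
  · exact ⟨p, q, r, hp, hq, hr, hp3, hM⟩

theorem ceil_mul_add_one_div_three (z : ℤ) :
    ⌈(z * (z + 1) : ℚ) / 3⌉ = (z * (z + 1) + 2) / 3 := by
  have h := Rat.ceil_intCast_div_natCast (z * (z + 1)) 3
  push_cast at h
  rw [h]
  omega

theorem exists_three_mul_sq_eq {r : ℤ} (hr : Odd r) :
    ∃ x, 3 * r ^ 2 = 12 * (x * (x + 1)) + 3 := by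
  obtain ⟨x, rfl⟩ := hr
  exact ⟨x, by ring⟩

theorem exists_sq_eq_twelve_mul_div_three_add_one {p : ℤ} (hp : Odd p) (hp3 : ¬3 ∣ p) :
    ∃ y : ℤ, 3 ∣ y * (y + 1) ∧ p ^ 2 = 12 * (y * (y + 1) / 3) + 1 := by
  obtain ⟨K, hK⟩ : ∃ K, p ^ 2 = (6 * K + 1) ^ 2 := by
    rw [Int.odd_iff] at hp
    rcases (by omega : p % 6 = 1 ∨ p % 6 = 5) with h | h
    · exact ⟨p / 6, by congr 1; omega⟩
    · exact ⟨-p / 6, by rw [← neg_sq]; congr 1; omega⟩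
  refine ⟨3 * K, ⟨K * (3 * K + 1), by ring⟩, ?_⟩
  rw [show 3 * K * (3 * K + 1) = 3 * (K * (3 * K + 1)) by ring,
    Int.mul_ediv_cancel_left _ three_ne_zero, hK]
  ring

theorem exists_sq_eq_twelve_mul_ceil_add_one {q : ℤ} (hq : Odd q) (hq3 : ¬3 ∣ q) :
    ∃ z : ℤ, q ^ 2 = 12 * ⌈(z * (z + 1) : ℚ) / 3⌉ + 1 := by
  obtain ⟨z, rfl⟩ := hq
  rw [Int.dvd_iff_emod_eq_zero] at hq3
  obtain ⟨W, hW⟩ : 3 ∣ z * (z + 1) := by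
    rcases (by omega : z % 3 = 0 ∨ z % 3 = 1 ∨ z % 3 = 2) with h | h | h
    · exact (Int.dvd_of_emod_eq_zero h).mul_right _
    · omega
    · exact (Int.dvd_of_emod_eq_zero (by omega)).mul_left _
  refine ⟨z, ?_⟩
  rw [ceil_mul_add_one_div_three, hW, show (2 * z + 1) ^ 2 = 4 * (z * (z + 1)) + 1 by ring, hW]
  omega

theorem exists_sq_add_three_eq_twelve_mul_ceil {q : ℤ} (hq : Odd q) (hq3 : 3 ∣ q) :
    ∃ z : ℤ, q ^ 2 + 3 = 12 * ⌈(z * (z + 1) : ℚ) / 3⌉ := by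
  obtain ⟨z, rfl⟩ := hq
  obtain ⟨m, rfl⟩ : ∃ m, z = 3 * m + 1 := ⟨z / 3, by omega⟩
  refine ⟨3 * m + 1, ?_⟩
  rw [ceil_mul_add_one_div_three,
    show (3 * m + 1) * (3 * m + 1 + 1) = 3 * (3 * m ^ 2 + 3 * m) + 2 by ring,
    show (2 * (3 * m + 1) + 1) ^ 2 + 3 = 12 * (3 * m ^ 2 + 3 * m + 1) by ring]
  omega

theorem stmt15 (n : ℕ) :
    ∃ x y z : ℤ, (3 : ℤ) ∣ y*(y+1) ∧
      (n : ℤ) = x*(x+1) + y*(y+1)/3 + ⌈(z*(z+1) : ℚ)/3⌉ := by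
  obtain ⟨p, q, r, hp, hq, hr, hp3, hM⟩ :=
    -- `12n + 5` for even `n`, `12n + 1` for odd `n`
    exists_odd_eq_sq_add_sq_add_three_mul_sq (12 * n + 1 + 4 * ((n + 1) % 2)) (by omega) (by omega)
  obtain ⟨x, hx⟩ := exists_three_mul_sq_eq hr
  obtain ⟨y, hy3, hy⟩ := exists_sq_eq_twelve_mul_div_three_add_one hp hp3
  by_cases hq3 : 3 ∣ q
  · obtain ⟨z, hz⟩ := exists_sq_add_three_eq_twelve_mul_ceil hq hq3
    exact ⟨x, y, z, hy3, by omega⟩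
  · obtain ⟨z, hz⟩ := exists_sq_eq_twelve_mul_ceil_add_one hq hq3
    exact ⟨x, y, z, hy3, by omega⟩
end

section
/- For every integer a > 1, every natural number n can be written as ⌊(x^2 + y^2 + z^2)/a⌋ for some integers x, y, z. -/
/-!
An interval `[a n, a n + a)` with `a ≥ 2` contains some `N ≡ 1, 2 (mod 4)`, and then `⌊N / a⌋ = n`;
so it suffices that every such `N` is a sum of three squares.

For this we follow the classical argument through ternary forms. By Dirichlet's theorem there is a
prime `p ≡ -1 (mod N)` modulo which `-N` is a square (the Jacobi symbol `(-N / p)` only depends on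
`p` modulo `4N`), and this yields a positive definite integral ternary form of determinant 1 that
represents `N`. Such a form only represents sums of three squares: conjugate it so that its
`(0,0)` entry `m` is minimal over its `GL₃(ℤ)`-orbit; completing the square leaves a binary form of
determinant `m` whose orbit minimum `μ` satisfies Hermite's bound `3μ² ≤ 4m`, while minimality of
`m` gives `3m² ≤ 4μ`. Hence `m = 1`, and the form is a square plus a binary form of determinant 1,
which only represents sums of two squares by the same argument one dimension lower.
-/

open Matrix

lemma Int.exists_abs_two_mul_add_mul_le (d : ℤ) {a : ℤ} (ha : 0 < a) :
    ∃ s, |2 * (d + a * s)| ≤ a := by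
  refine ⟨-((2 * d + a) / (2 * a)), abs_le.mpr ⟨?_, ?_⟩⟩
  · have := Int.emod_nonneg (2 * d + a) (by positivity : (2 * a) ≠ 0)
    have := Int.mul_ediv_add_emod (2 * d + a) (2 * a)
    linarith
  · have := Int.emod_lt_of_pos (2 * d + a) (by positivity : (0 : ℤ) < 2 * a)
    have := Int.mul_ediv_add_emod (2 * d + a) (2 * a)
    linarith

namespace Matrix

section Chio

variable {n : ℕ} {R : Type*} [CommRing R]

/-- Chiò's pivotal condensation of `A` at the entry `(0, 0)`. -/
def chio (A : Matrix (Fin (n + 1)) (Fin (n + 1)) R) : Matrix (Fin n) (Fin n) R :=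
  of fun j k => A 0 0 * A j.succ k.succ - A j.succ 0 * A 0 k.succ

@[simp]
lemma chio_apply (A : Matrix (Fin (n + 1)) (Fin (n + 1)) R) (j k : Fin n) :
    A.chio j k = A 0 0 * A j.succ k.succ - A j.succ 0 * A 0 k.succ := rfl

lemma dotProduct_mulVec_fin_one (C : Matrix (Fin 1) (Fin 1) R) (u : Fin 1 → R) :
    u ⬝ᵥ C *ᵥ u = C 0 0 * u 0 ^ 2 := by
  simp [dotProduct, mulVec]
  ring

lemma chio_fin_two (A : Matrix (Fin 2) (Fin 2) R) : A.chio 0 0 = A.det := by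
  simp [det_fin_two, mul_comm]

lemma det_chio_fin_three (A : Matrix (Fin 3) (Fin 3) R) : A.chio.det = A 0 0 * A.det := by
  simp [det_fin_two, det_fin_three]
  ring

lemma IsSymm.chio {A : Matrix (Fin (n + 1)) (Fin (n + 1)) R} (hA : A.IsSymm) : A.chio.IsSymm := by
  ext j k
  simp only [transpose_apply, chio_apply, hA.apply k.succ j.succ, hA.apply 0 j.succ,
    hA.apply 0 k.succ]
  ring

lemma mulVec_apply_zero (A : Matrix (Fin (n + 1)) (Fin (n + 1)) R) (v : Fin (n + 1) → R) :
    (A *ᵥ v) 0 = A 0 0 * v 0 + (fun j => A 0 j.succ) ⬝ᵥ Fin.tail v := by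
  simp [mulVec, dotProduct, Fin.sum_univ_succ, Fin.tail]

lemma IsSymm.mul_dotProduct_mulVec_self {A : Matrix (Fin (n + 1)) (Fin (n + 1)) R}
    (hA : A.IsSymm) (v : Fin (n + 1) → R) :
    A 0 0 * (v ⬝ᵥ A *ᵥ v) = (A *ᵥ v) 0 ^ 2 + Fin.tail v ⬝ᵥ A.chio *ᵥ Fin.tail v := by
  set b : Fin n → R := fun j => A 0 j.succ
  set w := Fin.tail v
  set A' := A.submatrix Fin.succ Fin.succ
  have hcol : (fun j : Fin n => A j.succ 0) = b := funext fun j => hA.apply 0 j.succ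
  have hquad : v ⬝ᵥ A *ᵥ v = A 0 0 * v 0 ^ 2 + v 0 * (b ⬝ᵥ w) + v 0 * (w ⬝ᵥ fun j => A j.succ 0)
      + w ⬝ᵥ A' *ᵥ w := by
    simp only [dotProduct, mulVec, Fin.sum_univ_succ, mul_add, Finset.sum_add_distrib,
      Finset.mul_sum, b, w, A', Fin.tail, submatrix_apply]
    ring_nf
  have hchio : w ⬝ᵥ A.chio *ᵥ w
      = A 0 0 * (w ⬝ᵥ A' *ᵥ w) - (w ⬝ᵥ fun j => A j.succ 0) * (b ⬝ᵥ w) := by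
    simp only [dotProduct]
    rw [Finset.sum_mul_sum]
    simp only [mulVec, dotProduct, chio_apply, Finset.mul_sum, b, A', submatrix_apply]
    rw [← Finset.sum_sub_distrib]
    refine Finset.sum_congr rfl fun j _ => ?_
    rw [← Finset.sum_sub_distrib]
    exact Finset.sum_congr rfl fun k _ => by ring
  rw [hquad, mulVec_apply_zero, hchio, hcol, dotProduct_comm w b]
  ring

variable [LinearOrder R] [IsStrictOrderedRing R] [StarRing R] [TrivialStar R]

lemma posDef_fin_one_iff {A : Matrix (Fin 1) (Fin 1) R} : A.PosDef ↔ 0 < A 0 0 := by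
  refine ⟨fun hA => hA.diag_pos, fun h => .of_dotProduct_mulVec_pos ?_ fun v hv => ?_⟩
  · exact isHermitian_iff_isSymm.mpr (by ext i j; rw [Subsingleton.elim i j]; rfl)
  · have hv0 : v 0 ≠ 0 := fun h0 => hv (funext fun i => by rwa [Subsingleton.elim i 0])
    simp only [star_trivial, dotProduct, mulVec, Fin.sum_univ_one]
    nlinarith [mul_pos h (sq_pos_of_ne_zero hv0)]

theorem IsSymm.posDef_iff_chio {A : Matrix (Fin (n + 1)) (Fin (n + 1)) R} (hA : A.IsSymm)
    (h0 : 0 < A 0 0) : A.PosDef ↔ A.chio.PosDef := by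
  simp only [posDef_iff_dotProduct_mulVec, star_trivial, isHermitian_iff_isSymm, hA, hA.chio,
    true_and]
  constructor
  · intro hpos w hw
    set v : Fin (n + 1) → R := Fin.cons (-((fun j => A 0 j.succ) ⬝ᵥ w)) (A 0 0 • w)
    have hv : v ≠ 0 := fun h => hw <| by
      have htail := congrArg Fin.tail h
      rw [Fin.tail_cons] at htail
      exact (smul_eq_zero.mp htail).resolve_left h0.ne'
    have key := hA.mul_dotProduct_mulVec_self v
    have hlin : (A *ᵥ v) 0 = 0 := by
      rw [mulVec_apply_zero]
      simp [v, dotProduct_smul]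
    rw [hlin, Fin.tail_cons, mulVec_smul, dotProduct_smul, smul_dotProduct, smul_eq_mul,
      smul_eq_mul] at key
    have hprod : 0 < A 0 0 * (A 0 0 * (w ⬝ᵥ A.chio *ᵥ w)) := by
      nlinarith [mul_pos h0 (hpos hv)]
    exact pos_of_mul_pos_right (pos_of_mul_pos_right hprod h0.le) h0.le
  · intro hpos v hv
    have key := hA.mul_dotProduct_mulVec_self v
    by_cases ht : Fin.tail v = 0
    · have hv0 : v 0 ≠ 0 := fun h => hv <| by
        rw [← Fin.cons_self_tail v, h, ht]
        exact cons_zero_zero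
      rw [mulVec_apply_zero, ht, dotProduct_zero, add_zero, zero_dotProduct, add_zero] at key
      have : 0 < A 0 0 * (v ⬝ᵥ A *ᵥ v) := key ▸ sq_pos_of_ne_zero (mul_ne_zero h0.ne' hv0)
      exact pos_of_mul_pos_right this h0.le
    · have : 0 < A 0 0 * (v ⬝ᵥ A *ᵥ v) := key ▸ add_pos_of_nonneg_of_pos (sq_nonneg _) (hpos ht)
      exact pos_of_mul_pos_right this h0.le

end Chio

lemma PosDef.isSymm {ι R : Type*} [Ring R] [PartialOrder R] [StarRing R] [TrivialStar R]
    {A : Matrix ι ι R} (hA : A.PosDef) : A.IsSymm :=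
  isHermitian_iff_isSymm.mp hA.isHermitian

section Conjugation

variable {ι R : Type*} [Fintype ι] [CommRing R]

lemma dotProduct_transpose_mul_mul_mulVec (A U : Matrix ι ι R) (w : ι → R) :
    w ⬝ᵥ (Uᵀ * A * U) *ᵥ w = (U *ᵥ w) ⬝ᵥ A *ᵥ (U *ᵥ w) := by
  rw [← mulVec_mulVec, ← mulVec_mulVec, dotProduct_mulVec, vecMul_transpose]

lemma transpose_mul_mul_apply (A U : Matrix ι ι R) (i j : ι) :
    (Uᵀ * A * U) i j = (fun k => U k i) ⬝ᵥ A *ᵥ fun k => U k j := by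
  rw [mul_apply', dotProduct_mulVec]
  rfl

variable [DecidableEq ι]

lemma exists_dotProduct_transpose_mul_mul_mulVec_eq (A : Matrix ι ι R) {U : Matrix ι ι R}
    (hU : IsUnit U.det) (v : ι → R) : ∃ w, v ⬝ᵥ A *ᵥ v = w ⬝ᵥ (Uᵀ * A * U) *ᵥ w :=
  ⟨U⁻¹ *ᵥ v, by rw [dotProduct_transpose_mul_mul_mulVec, mulVec_mulVec, mul_nonsing_inv U hU,
    one_mulVec]⟩

lemma PosDef.transpose_mul_mul [PartialOrder R] [StarRing R] [TrivialStar R] {A U : Matrix ι ι R}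
    (hA : A.PosDef) (hU : IsUnit U.det) : (Uᵀ * A * U).PosDef := by
  rw [← conjTranspose_eq_transpose_of_trivial]
  exact hA.conjTranspose_mul_mul_same
    (mulVec_injective_of_isUnit ((isUnit_iff_isUnit_det U).mpr hU))

lemma det_transpose_mul_mul_of_isUnit (A : Matrix ι ι ℤ) {U : Matrix ι ι ℤ} (hU : IsUnit U.det) :
    (Uᵀ * A * U).det = A.det := by
  rw [det_mul, det_mul, det_transpose, mul_right_comm, Int.isUnit_mul_self hU, one_mul]

def IsOrbitMinAt (A : Matrix ι ι ℤ) (i : ι) : Prop :=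
  ∀ U : Matrix ι ι ℤ, IsUnit U.det → A i i ≤ (Uᵀ * A * U) i i

lemma exists_isOrbitMinAt {A : Matrix ι ι ℤ} (hA : A.PosSemidef) (i : ι) :
    ∃ U : Matrix ι ι ℤ, IsUnit U.det ∧ IsOrbitMinAt (Uᵀ * A * U) i := by
  obtain ⟨_, ⟨U, hU, rfl⟩, hmin⟩ := Int.exists_least_of_bdd
    (P := fun z => ∃ U : Matrix ι ι ℤ, IsUnit U.det ∧ (Uᵀ * A * U) i i = z)
    ⟨0, fun _ ⟨U, _, hz⟩ => by
      rw [← hz, transpose_mul_mul_apply]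
      simpa using hA.dotProduct_mulVec_nonneg fun k => U k i⟩
    ⟨_, 1, by simp, rfl⟩
  refine ⟨U, hU, fun V hV => ?_⟩
  have hUV : (U * V)ᵀ * A * (U * V) = Vᵀ * (Uᵀ * A * U) * V := by
    simp only [transpose_mul, Matrix.mul_assoc]
  exact hmin _ ⟨U * V, by simpa using hU.mul hV, by rw [hUV]⟩

end Conjugation

lemma IsOrbitMinAt.three_mul_sq_le_four_mul_det {A : Matrix (Fin 2) (Fin 2) ℤ}
    (hmin : IsOrbitMinAt A 0) (hA : A.PosDef) : 3 * A 0 0 ^ 2 ≤ 4 * A.det := by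
  have ha : 0 < A 0 0 := hA.diag_pos
  obtain ⟨t, ht⟩ := Int.exists_abs_two_mul_add_mul_le (A 0 1) ha
  have hle : A 0 0 ≤ ![t, 1] ⬝ᵥ A *ᵥ ![t, 1] := by
    have := hmin !![t, -1; 1, 0] (by simp [det_fin_two])
    rwa [transpose_mul_mul_apply, show (fun k => !![t, -1; 1, 0] k 0) = ![t, 1] by
      ext k; fin_cases k <;> rfl] at this
  have hsplit : A 0 0 * (![t, 1] ⬝ᵥ A *ᵥ ![t, 1]) = (A 0 1 + A 0 0 * t) ^ 2 + A.det := by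
    rw [hA.isSymm.mul_dotProduct_mulVec_self, mulVec_apply_zero, dotProduct_mulVec_fin_one,
      chio_fin_two]
    simp [dotProduct, Fin.tail]
    ring
  have hround : (2 * (A 0 1 + A 0 0 * t)) ^ 2 ≤ A 0 0 ^ 2 :=
    sq_le_sq.mpr (ht.trans (le_abs_self _))
  nlinarith

theorem PosDef.exists_dotProduct_mulVec_eq_sq_add_sq {A : Matrix (Fin 2) (Fin 2) ℤ}
    (hA : A.PosDef) (hdet : A.det = 1) (v : Fin 2 → ℤ) :
    ∃ x y : ℤ, v ⬝ᵥ A *ᵥ v = x ^ 2 + y ^ 2 := by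
  obtain ⟨U, hU, hmin⟩ := exists_isOrbitMinAt hA.posSemidef 0
  set B := Uᵀ * A * U
  have hB : B.PosDef := hA.transpose_mul_mul hU
  have hBdet : B.det = 1 := by rw [det_transpose_mul_mul_of_isUnit A hU, hdet]
  have hB00 : B 0 0 = 1 := by
    have := hmin.three_mul_sq_le_four_mul_det hB
    have := hB.diag_pos (i := 0)
    nlinarith
  obtain ⟨w, hw⟩ := exists_dotProduct_transpose_mul_mul_mulVec_eq A hU v
  refine ⟨(B *ᵥ w) 0, w 1, ?_⟩
  have := hB.isSymm.mul_dotProduct_mulVec_self w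
  rw [hB00, one_mul] at this
  rw [hw, this, dotProduct_mulVec_fin_one, chio_fin_two, hBdet, one_mul]
  rfl

lemma IsOrbitMinAt.apply_zero_zero_eq_one {A : Matrix (Fin 3) (Fin 3) ℤ}
    (hmin : IsOrbitMinAt A 0) (hA : A.PosDef) (hdet : A.det = 1) : A 0 0 = 1 := by
  have hm : 0 < A 0 0 := hA.diag_pos
  have hC : A.chio.PosDef := (hA.isSymm.posDef_iff_chio hm).mp hA
  obtain ⟨V, hV, hVmin⟩ := exists_isOrbitMinAt hC.posSemidef 0
  have hμ : 3 * (Vᵀ * A.chio * V) 0 0 ^ 2 ≤ 4 * A 0 0 := by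
    simpa [det_transpose_mul_mul_of_isUnit _ hV, det_chio_fin_three, hdet] using
      hVmin.three_mul_sq_le_four_mul_det (hC.transpose_mul_mul hV)
  have hμpos : 0 < (Vᵀ * A.chio * V) 0 0 := (hC.transpose_mul_mul hV).diag_pos
  obtain ⟨x, hx⟩ := Int.exists_abs_two_mul_add_mul_le (A 0 1 * V 0 0 + A 0 2 * V 1 0) hm
  set v : Fin 3 → ℤ := ![x, V 0 0, V 1 0]
  have hle : A 0 0 ≤ v ⬝ᵥ A *ᵥ v := by
    set W : Matrix (Fin 3) (Fin 3) ℤ := !![x, 1, 0; V 0 0, 0, V 0 1; V 1 0, 0, V 1 1]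
    have hW : W.det = -V.det := by
      simp [W, det_fin_three, det_fin_two]
      ring
    have := hmin W (hW ▸ hV.neg)
    rwa [transpose_mul_mul_apply, show (fun k => W k 0) = v by ext k; fin_cases k <;> rfl] at this
  have hsplit : A 0 0 * (v ⬝ᵥ A *ᵥ v)
      = (A 0 1 * V 0 0 + A 0 2 * V 1 0 + A 0 0 * x) ^ 2 + (Vᵀ * A.chio * V) 0 0 := by
    rw [hA.isSymm.mul_dotProduct_mulVec_self, mulVec_apply_zero, transpose_mul_mul_apply,
      show Fin.tail v = fun k => V k 0 by ext k; fin_cases k <;> rfl]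
    simp [dotProduct, Fin.sum_univ_two, v]
    ring
  have hround : (2 * (A 0 1 * V 0 0 + A 0 2 * V 1 0 + A 0 0 * x)) ^ 2 ≤ A 0 0 ^ 2 :=
    sq_le_sq.mpr (hx.trans (le_abs_self _))
  have hm2 : 3 * A 0 0 ^ 2 ≤ 4 * (Vᵀ * A.chio * V) 0 0 := by nlinarith
  nlinarith

theorem PosDef.exists_dotProduct_mulVec_eq_sq_add_sq_add_sq {A : Matrix (Fin 3) (Fin 3) ℤ}
    (hA : A.PosDef) (hdet : A.det = 1) (v : Fin 3 → ℤ) :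
    ∃ x y z : ℤ, v ⬝ᵥ A *ᵥ v = x ^ 2 + y ^ 2 + z ^ 2 := by
  obtain ⟨U, hU, hmin⟩ := exists_isOrbitMinAt hA.posSemidef 0
  set B := Uᵀ * A * U
  have hB : B.PosDef := hA.transpose_mul_mul hU
  have hBdet : B.det = 1 := by rw [det_transpose_mul_mul_of_isUnit A hU, hdet]
  have hB00 : B 0 0 = 1 := hmin.apply_zero_zero_eq_one hB hBdet
  have hC : B.chio.PosDef := (hB.isSymm.posDef_iff_chio (hB00 ▸ one_pos)).mp hB
  have hCdet : B.chio.det = 1 := by rw [det_chio_fin_three, hB00, hBdet, one_mul]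
  obtain ⟨w, hw⟩ := exists_dotProduct_transpose_mul_mul_mulVec_eq A hU v
  obtain ⟨y, z, hyz⟩ := hC.exists_dotProduct_mulVec_eq_sq_add_sq hCdet (Fin.tail w)
  refine ⟨(B *ᵥ w) 0, y, z, ?_⟩
  have := hB.isSymm.mul_dotProduct_mulVec_self w
  rw [hB00, one_mul] at this
  rw [hw, this, hyz, add_assoc]

end Matrix

lemma exists_jacobiSym_neg_eq_one (n : ℕ) (hn : n % 4 = 1 ∨ n % 4 = 2) :
    ∃ c : ℕ, c % 4 = 1 ∧ n ∣ c + 1 ∧ jacobiSym (-n) c = 1 := by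
  have hneg (c : ℕ) (hc : c % 4 = 1) : jacobiSym (-n) c = jacobiSym n c := by
    rw [neg_eq_neg_one_mul, jacobiSym.mul_left, jacobiSym.at_neg_one (Nat.odd_iff.mpr (by omega)),
      ZMod.χ₄_nat_one_mod_four hc, one_mul]
  rcases hn with hn | hn
  · refine ⟨2 * n - 1, by omega, ⟨2, by omega⟩, ?_⟩
    rw [hneg _ (by omega), jacobiSym.quadratic_reciprocity_one_mod_four hn
      (Nat.odd_iff.mpr (by omega)), jacobiSym.mod_left' (a₂ := -1)
      (Int.modEq_iff_dvd.mpr ⟨-2, by omega⟩), jacobiSym.at_neg_one (Nat.odd_iff.mpr (by omega)),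
      ZMod.χ₄_nat_one_mod_four hn]
  · refine ⟨n - 1, by omega, ⟨1, by omega⟩, ?_⟩
    rw [hneg _ (by omega), jacobiSym.mod_left' (a₂ := 1) (Int.modEq_iff_dvd.mpr ⟨-1, by omega⟩),
      jacobiSym.one_left]

lemma exists_prime_jacobiSym_neg_eq_one (n : ℕ) (hn : n % 4 = 1 ∨ n % 4 = 2) :
    ∃ p : ℕ, p.Prime ∧ n < p ∧ n ∣ p + 1 ∧ jacobiSym (-n) p = 1 := by
  obtain ⟨c, hc4, hcn, hc⟩ := exists_jacobiSym_neg_eq_one n hn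
  have hcop : c.Coprime (4 * n) := by
    refine Nat.Coprime.mul_right ?_ (Nat.Coprime.coprime_dvd_right hcn
      (Nat.coprime_self_add_right.mpr (Nat.coprime_one_right c)))
    rw [Nat.Coprime, Nat.gcd_comm, Nat.gcd_rec, hc4, Nat.gcd_one_left]
  have : NeZero (4 * n) := ⟨by omega⟩
  obtain ⟨p, hpn, hp, hpc⟩ :=
    Nat.forall_exists_prime_gt_and_eq_mod ((ZMod.isUnit_iff_coprime c (4 * n)).mpr hcop) n
  have hmod : p ≡ c [MOD 4 * n] := (ZMod.natCast_eq_natCast_iff _ _ _).mp hpc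
  have hp4 : p % 4 = c % 4 := hmod.of_mul_right n
  refine ⟨p, hp, hpn, ((hmod.of_mul_left 4).add_right 1).dvd_iff dvd_rfl |>.mpr hcn, ?_⟩
  have hperiodic (b : ℕ) (hb : b % 4 = 1) : jacobiSym (-n) b = jacobiSym (-n) (b % (4 * n)) := by
    rw [jacobiSym.mod_right _ (Nat.odd_iff.mpr (by omega)), Int.natAbs_neg, Int.natAbs_natCast]
  rw [hperiodic p (by omega), hmod, ← hperiodic c hc4, hc]

lemma exists_dvd_mul_sq_add_one_s16 {p : ℕ} [Fact p.Prime] {n : ℕ} (hpn : ¬ p ∣ n)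
    (h : jacobiSym (-n) p = 1) : ∃ r : ℤ, (p : ℤ) ∣ n * r ^ 2 + 1 := by
  have hn : (n : ZMod p) ≠ 0 := by rwa [Ne, ZMod.natCast_eq_zero_iff]
  obtain ⟨s, hs⟩ := (legendreSym.eq_one_iff p (a := -n) (by simpa using hn)).mp
    (by rwa [jacobiSym.legendreSym.to_jacobiSym])
  refine ⟨ZMod.cast (s * (n : ZMod p)⁻¹), (ZMod.intCast_zmod_eq_zero_iff_dvd _ _).mp ?_⟩
  push_cast [ZMod.intCast_zmod_cast]
  rw [mul_pow, sq, sq, ← hs]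
  push_cast
  field_simp
  ring

theorem exists_sq_add_sq_add_sq_of_mul_sub_one_mul_eq {n t r c : ℤ} (hn : 0 < n)
    (hp : 0 < n * t - 1) (hc : (n * t - 1) * c = n * r ^ 2 + 1) :
    ∃ x y z : ℤ, n = x ^ 2 + y ^ 2 + z ^ 2 := by
  set A : Matrix (Fin 3) (Fin 3) ℤ := !![n, 1, 0; 1, t, r; 0, r, c]
  have hsymm : A.IsSymm := by ext i j; fin_cases i <;> fin_cases j <;> rfl
  have hdet : A.det = 1 := by
    simp [A, det_fin_three]
    linear_combination hc
  have hchio : A.chio.PosDef := by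
    rw [hsymm.chio.posDef_iff_chio (by simpa [A] using hp), posDef_fin_one_iff, chio_fin_two,
      det_chio_fin_three, hdet]
    simpa [A] using hn
  have hval : ![1, 0, 0] ⬝ᵥ A *ᵥ ![1, 0, 0] = n := by
    simp [A, dotProduct, mulVec, Fin.sum_univ_three]
  exact hval ▸ ((hsymm.posDef_iff_chio hn).mpr hchio).exists_dotProduct_mulVec_eq_sq_add_sq_add_sq
    hdet ![1, 0, 0]

theorem Nat.exists_sq_add_sq_add_sq_of_mod_four {n : ℕ} (hn : n % 4 = 1 ∨ n % 4 = 2) :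
    ∃ x y z : ℤ, (n : ℤ) = x ^ 2 + y ^ 2 + z ^ 2 := by
  obtain ⟨p, hp, hnp, ⟨t, ht⟩, hjac⟩ := exists_prime_jacobiSym_neg_eq_one n hn
  have : Fact p.Prime := ⟨hp⟩
  obtain ⟨r, c, hc⟩ :=
    exists_dvd_mul_sq_add_one_s16 (fun h => (Nat.le_of_dvd (by omega) h).not_gt hnp) hjac
  have hpt : (n : ℤ) * t - 1 = p := by rw [sub_eq_iff_eq_add]; exact_mod_cast ht.symm
  exact exists_sq_add_sq_add_sq_of_mul_sub_one_mul_eq (by omega)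
    (by rw [hpt]; exact_mod_cast hp.pos) (by rw [hpt, ← hc])

lemma Int.exists_mem_Ico_mul_emod_four {a : ℤ} (ha : 1 < a) (n : ℤ) :
    ∃ N ∈ Set.Ico (a * n) (a * n + a), N % 4 = 1 ∨ N % 4 = 2 := by
  rcases (by omega : a * n % 4 = 0 ∨ a * n % 4 = 1 ∨ a * n % 4 = 2 ∨ a * n % 4 = 3)
    with h | h | h | h
  · exact ⟨a * n + 1, ⟨by omega, by omega⟩, by omega⟩
  · exact ⟨a * n, ⟨le_rfl, by omega⟩, by omega⟩
  · exact ⟨a * n, ⟨le_rfl, by omega⟩, by omega⟩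
  · have ha2 : a % 2 = 1 := Int.not_even_iff.mp fun he => by
      have := Int.even_iff.mp (he.mul_right n)
      omega
    exact ⟨a * n + 2, ⟨by omega, by omega⟩, by omega⟩

theorem stmt16 (a : ℤ) (ha : 1 < a) (n : ℕ) :
    ∃ x y z : ℤ, (n : ℤ) = ⌊((x^2 + y^2 + z^2 : ℤ) : ℚ)/a⌋ := by
  obtain ⟨N, ⟨hlo, hhi⟩, hN⟩ := Int.exists_mem_Ico_mul_emod_four ha n
  lift N to ℕ using (mul_nonneg (by omega) n.cast_nonneg).trans hlo
  obtain ⟨x, y, z, hxyz⟩ := Nat.exists_sq_add_sq_add_sq_of_mod_four (n := N) (by omega)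
  refine ⟨x, y, z, ?_⟩
  have ha' : (0 : ℚ) < a := by exact_mod_cast (by omega : (0 : ℤ) < a)
  rw [← hxyz, eq_comm, Int.floor_eq_iff, le_div_iff₀ ha', div_lt_iff₀ ha']
  constructor <;> norm_cast <;> push_cast <;> linarith
end
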